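/- With the 3-SAT construction of π_1, π_2 as described, there exist natural numbers z_1, z_2 such that π_1^{z_1} π_2^{z_2} is fixpoint-free if and only if there exists a natural number z such that π_1 π_2^{z} is fixpoint-free (i.e. the exponent of π_1 can always be taken equal to 1, so the group ⟨π_1, π_2⟩ contains a fixpoint-free element if and only if the coset π_1⟨π_2⟩ does). -/

import Mathlib

/-! 3-SAT construction.  Variables are `x_1, …, x_n`, indexed by `Fin n`; the `j`-th clause is
`C_j = {x̃_{idx j 0}, x̃_{idx j 1}, x̃_{idx j 2}}` with `idx j` strictly monotone, where the
literal on variable `idx j a` is negated iff `neg j a = true`.  The first `2n` primes are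
`p_1, …, p_n, p̄_1, …, p̄_n` with `p_i = P (i-1)` and `p̄_i = P (n+i-1)` for the enumeration
`P` of the primes (`P 0 = 2`).  Every `Sym(ℓ)`-component is realized on `Fin ℓ`, and the
`ℓ`-cycle `([ℓ]) = (1,2,…,ℓ)` is realized as `finRotate ℓ`.  Fixpoint-freeness is checked on
the disjoint union of all components. -/

namespace SatConstruction

/-- `P i` is the `(i+1)`-st prime: `P 0 = 2`, `P 1 = 3`, ….  The prime `p_i` associated with
the positive literal `x_i` is `P (i-1)` and the prime `p̄_i` associated with the negative
literal `x̄_i` is `P (n+i-1)` (with `i ∈ [n]` one-indexed). -/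
noncomputable def P (i : ℕ) : ℕ := Nat.nth Nat.Prime i

/-- `p̃` of a literal: the prime of the underlying variable, according to the sign. -/
noncomputable def ptil (n : ℕ) {m : ℕ} (idx : Fin m → Fin 3 → Fin n)
    (neg : Fin m → Fin 3 → Bool) (j : Fin m) (a : Fin 3) : ℕ :=
  if neg j a then P (n + (idx j a).val) else P (idx j a).val

/-- `r_j = p̃_{i_1} p̃_{i_2} p̃_{i_3}` for the clause `C_j`. -/
noncomputable def r (n : ℕ) {m : ℕ} (idx : Fin m → Fin 3 → Fin n)
    (neg : Fin m → Fin 3 → Bool) (j : Fin m) : ℕ :=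
  ptil n idx neg j 0 * ptil n idx neg j 1 * ptil n idx neg j 2

/-- The underlying set of the group
`G = ∏_{i=1}^n (Sym(p_i) × Sym(p̄_i) × Sym(p_i p̄_i)^{(p_i-1)(p̄_i-1)+1}) × ∏_{j=1}^m Sym(r_j)`
(embedded in a symmetric group).  The `(p_i-1)(p̄_i-1)+1` copies of `Sym(p_i p̄_i)` are
indexed by `Option (Fin (p_i - 1) × Fin (p̄_i - 1))`: `none` is the component of `α_{i,3}`
and `some (l-1, k-1)` is the component of `α_{i,l,k}`. -/
abbrev Omega (n : ℕ) {m : ℕ} (idx : Fin m → Fin 3 → Fin n)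
    (neg : Fin m → Fin 3 → Bool) : Type :=
  (Σ i : Fin n,
      (Fin (P i.val) ⊕ Fin (P (n + i.val))) ⊕
        (Σ _c : Option (Fin (P i.val - 1) × Fin (P (n + i.val) - 1)),
          Fin (P i.val * P (n + i.val)))) ⊕
    (Σ j : Fin m, Fin (r n idx neg j))

/-- `π_1 = (α_1,…,α_n,β_1,…,β_m)` with
`α_i = (α_{i,1}, α_{i,2}, α_{i,3}, α_{i,1,1}, …, α_{i,p_i-1,p̄_i-1})`,
`α_{i,1} = ([p_i])`, `α_{i,2} = ([p̄_i])`, `α_{i,3} = id`,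
`α_{i,l,k} = ([p_i p̄_i])^{s_{i,l,k}}` and `β_j = id`. -/
noncomputable def pi1 (n : ℕ) {m : ℕ} (idx : Fin m → Fin 3 → Fin n)
    (neg : Fin m → Fin 3 → Bool) (s : Fin n → ℕ → ℕ → ℕ) :
    Equiv.Perm (Omega n idx neg) :=
  Equiv.sumCongr
    (Equiv.sigmaCongrRight fun i =>
      Equiv.sumCongr
        (Equiv.sumCongr (finRotate _) (finRotate _))
        (Equiv.sigmaCongrRight fun c =>
          match c with
          | none => Equiv.refl _
          | some (l, k) =>
              finRotate (P i.val * P (n + i.val)) ^ s i (l.val + 1) (k.val + 1)))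
    (Equiv.refl _)

/-- `π_2 = (γ_1,…,γ_n,δ_1,…,δ_m)` with
`γ_i = (γ_{i,1}, γ_{i,2}, γ_{i,3}, γ_{i,1,1}, …, γ_{i,p_i-1,p̄_i-1})`,
`γ_{i,1} = γ_{i,2} = id`, `γ_{i,3} = γ_{i,l,k} = ([p_i p̄_i])` and `δ_j = ([r_j])`. -/
noncomputable def pi2 (n : ℕ) {m : ℕ} (idx : Fin m → Fin 3 → Fin n)
    (neg : Fin m → Fin 3 → Bool) :
    Equiv.Perm (Omega n idx neg) :=
  Equiv.sumCongr
    (Equiv.sigmaCongrRight fun _i =>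
      Equiv.sumCongr (Equiv.refl _) (Equiv.sigmaCongrRight fun _c => finRotate _))
    (Equiv.sigmaCongrRight fun j => finRotate (r n idx neg j))

end SatConstruction

/-!
If `π₁^{z₁} π₂^{z₂}` is fixpoint-free, then no `p_i` or `p̄_i` divides `z₁`, for otherwise it
fixes the points of the `Sym(p_i)` or `Sym(p̄_i)` component. So `z₁` is invertible modulo
`M = (∏ p_i p̄_i)³`, a common multiple of all cycle lengths, and hence of the orders of `π₁` and
`π₂`. For `z₁ u ≡ 1 (mod M)` the power `(π₁^{z₁} π₂^{z₂})^u = π₁ π₂^{z₂ u}` is again fixpoint-free,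
since its `z₁`-th power is `π₁^{z₁} π₂^{z₂}`.
-/

theorem finRotate_pow_eq_one_of_dvd {ℓ k : ℕ} (h : ℓ ∣ k) : finRotate ℓ ^ k = 1 := by
  refine orderOf_dvd_iff_pow_eq_one.mp (dvd_trans ?_ h)
  rcases lt_or_ge ℓ 2 with hℓ | hℓ
  · have : Subsingleton (Fin ℓ) := Fin.subsingleton_iff_le_one.mpr (by omega)
    rw [Subsingleton.elim (finRotate ℓ) 1, orderOf_one]
    exact one_dvd ℓ
  · rw [← Equiv.Perm.lcm_cycleType, cycleType_finRotate_of_le hℓ]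
    simp

namespace Equiv.Perm

@[simp]
theorem sumCongr_pow {α β : Type*} (e : Perm α) (f : Perm β) (k : ℕ) :
    Equiv.sumCongr e f ^ k = Equiv.sumCongr (e ^ k) (f ^ k) :=
  (map_pow (sumCongrHom α β) (e, f) k).symm

@[simp]
theorem sigmaCongrRight_pow {α : Type*} {β : α → Type*} (F : ∀ a, Perm (β a))
    (k : ℕ) : Equiv.sigmaCongrRight F ^ k = Equiv.sigmaCongrRight (F ^ k) :=
  (map_pow (sigmaCongrRightHom β) F k).symm

theorem exists_mul_pow_apply_ne_self {α : Type*} {a b : Perm α} (hab : Commute a b)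
    {M z₁ z₂ : ℕ} (ha : a ^ M = 1) (hb : b ^ M = 1) (hz₁ : z₁.Coprime M)
    (h : ∀ x, (a ^ z₁ * b ^ z₂) x ≠ x) : ∃ z, ∀ x, (a * b ^ z) x ≠ x := by
  obtain rfl | hM := eq_or_ne M 0
  · exact ⟨z₂, by simpa [(Nat.coprime_zero_right z₁).mp hz₁] using h⟩
  obtain ⟨u, -, hu⟩ := Nat.exists_mul_mod_eq_of_coprime 1 hz₁ hM
  have pow_mul_eq_self (c : Perm α) (hc : c ^ M = 1) : c ^ (z₁ * u) = c := by
    rw [pow_eq_pow_mod _ hc, hu, ← pow_eq_pow_mod _ hc, pow_one]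
  have hcomm : Commute (a ^ z₁) (b ^ z₂) := hab.pow_pow z₁ z₂
  have hg : (a ^ z₁ * b ^ z₂) ^ M = 1 := by
    rw [hcomm.mul_pow, pow_right_comm, ha, one_pow, pow_right_comm, hb, one_pow, one_mul]
  refine ⟨z₂ * u, fun x hx => h x ?_⟩
  rw [← pow_mul_eq_self a ha, pow_mul, pow_mul, ← hcomm.mul_pow] at hx
  simpa only [← pow_mul, mul_comm u, pow_mul_eq_self _ hg] using
    pow_apply_eq_self_of_apply_eq_self hx z₁

end Equiv.Perm

namespace SatConstruction

theorem P_prime (t : ℕ) : (P t).Prime := Nat.prime_nth_prime t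

noncomputable def primeProduct (n : ℕ) : ℕ := ∏ i : Fin n, P i * P (n + i)

section

variable {n m : ℕ} {idx : Fin m → Fin 3 → Fin n} {neg : Fin m → Fin 3 → Bool}
  {s : Fin n → ℕ → ℕ → ℕ} {z₁ z₂ : ℕ}

theorem P_dvd_primeProduct (i : Fin n) : P i ∣ primeProduct n :=
  (dvd_mul_right _ _).trans (Finset.dvd_prod_of_mem _ (Finset.mem_univ i))

theorem P_add_dvd_primeProduct (i : Fin n) : P (n + i) ∣ primeProduct n :=
  (dvd_mul_left _ _).trans (Finset.dvd_prod_of_mem _ (Finset.mem_univ i))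

theorem ptil_dvd_primeProduct (j : Fin m) (a : Fin 3) : ptil n idx neg j a ∣ primeProduct n := by
  unfold ptil
  split
  · exact P_add_dvd_primeProduct _
  · exact P_dvd_primeProduct _

theorem r_dvd_primeProduct_pow (j : Fin m) : r n idx neg j ∣ primeProduct n ^ 3 := by
  rw [pow_three, ← mul_assoc]
  exact mul_dvd_mul (mul_dvd_mul (ptil_dvd_primeProduct j 0) (ptil_dvd_primeProduct j 1))
    (ptil_dvd_primeProduct j 2)

theorem pi1_commute_pi2 : Commute (pi1 n idx neg s) (pi2 n idx neg) := by
  ext x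
  rcases x with (⟨i, ((x | x) | ⟨(_ | ⟨l, k⟩), x⟩)⟩ | ⟨j, x⟩) <;>
    simp only [pi1, pi2, Equiv.Perm.mul_apply, Equiv.sumCongr_apply, Sum.map_inl, Sum.map_inr,
      Equiv.sigmaCongrRight_apply, Equiv.refl_apply]
  rw [← Equiv.Perm.mul_apply, ← Equiv.Perm.mul_apply, ← pow_succ, ← pow_succ']

theorem pi1_pow_mul_pi2_pow_apply_inl_inl_inl (i : Fin n) (x : Fin (P i)) :
    (pi1 n idx neg s ^ z₁ * pi2 n idx neg ^ z₂) (.inl ⟨i, .inl (.inl x)⟩) =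
      .inl ⟨i, .inl (.inl ((finRotate _ ^ z₁) x))⟩ := by
  simp [pi1, pi2, ← Equiv.Perm.one_def]

theorem pi1_pow_mul_pi2_pow_apply_inl_inl_inr (i : Fin n) (x : Fin (P (n + i))) :
    (pi1 n idx neg s ^ z₁ * pi2 n idx neg ^ z₂) (.inl ⟨i, .inl (.inr x)⟩) =
      .inl ⟨i, .inl (.inr ((finRotate _ ^ z₁) x))⟩ := by
  simp [pi1, pi2, ← Equiv.Perm.one_def]

theorem pi1_pow_mul_pi2_pow_apply_inl_inr_none (i : Fin n) (x : Fin (P i * P (n + i))) :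
    (pi1 n idx neg s ^ z₁ * pi2 n idx neg ^ z₂) (.inl ⟨i, .inr ⟨none, x⟩⟩) =
      .inl ⟨i, .inr ⟨none, (finRotate _ ^ z₂) x⟩⟩ := by
  simp [pi1, pi2, ← Equiv.Perm.one_def]

theorem pi1_pow_mul_pi2_pow_apply_inl_inr_some (i : Fin n) (l : Fin (P i - 1))
    (k : Fin (P (n + i) - 1)) (x : Fin (P i * P (n + i))) :
    (pi1 n idx neg s ^ z₁ * pi2 n idx neg ^ z₂) (.inl ⟨i, .inr ⟨some (l, k), x⟩⟩) =
      .inl ⟨i, .inr ⟨some (l, k), (finRotate _ ^ (s i (l + 1) (k + 1) * z₁ + z₂)) x⟩⟩ := by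
  simp [pi1, pi2, ← Equiv.Perm.one_def, pow_add, pow_mul]

theorem pi1_pow_mul_pi2_pow_apply_inr (j : Fin m) (x : Fin (r n idx neg j)) :
    (pi1 n idx neg s ^ z₁ * pi2 n idx neg ^ z₂) (.inr ⟨j, x⟩) =
      .inr ⟨j, (finRotate _ ^ z₂) x⟩ := by
  simp [pi1, pi2, ← Equiv.Perm.one_def]

theorem pi1_pow_mul_pi2_pow_eq_one (h₁ : primeProduct n ^ 3 ∣ z₁) (h₂ : primeProduct n ^ 3 ∣ z₂) :
    pi1 n idx neg s ^ z₁ * pi2 n idx neg ^ z₂ = 1 := by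
  have hQ : primeProduct n ∣ primeProduct n ^ 3 := dvd_pow_self _ three_ne_zero
  have hQQ (i : Fin n) : P i * P (n + i) ∣ primeProduct n ^ 3 :=
    (mul_dvd_mul (P_dvd_primeProduct i) (P_add_dvd_primeProduct i)).trans
      ⟨primeProduct n, by ring⟩
  ext x
  rcases x with (⟨i, ((x | x) | ⟨(_ | ⟨l, k⟩), x⟩)⟩ | ⟨j, x⟩)
  · rw [pi1_pow_mul_pi2_pow_apply_inl_inl_inl,
      finRotate_pow_eq_one_of_dvd ((P_dvd_primeProduct i).trans (hQ.trans h₁))]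
    rfl
  · rw [pi1_pow_mul_pi2_pow_apply_inl_inl_inr,
      finRotate_pow_eq_one_of_dvd ((P_add_dvd_primeProduct i).trans (hQ.trans h₁))]
    rfl
  · rw [pi1_pow_mul_pi2_pow_apply_inl_inr_none, finRotate_pow_eq_one_of_dvd ((hQQ i).trans h₂)]
    rfl
  · rw [pi1_pow_mul_pi2_pow_apply_inl_inr_some, finRotate_pow_eq_one_of_dvd
      ((hQQ i).trans (dvd_add (h₁.mul_left _) h₂))]
    rfl
  · rw [pi1_pow_mul_pi2_pow_apply_inr,
      finRotate_pow_eq_one_of_dvd ((r_dvd_primeProduct_pow j).trans h₂)]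
    rfl

theorem pi1_pow_primeProduct_pow : pi1 n idx neg s ^ primeProduct n ^ 3 = 1 := by
  simpa using pi1_pow_mul_pi2_pow_eq_one (z₂ := 0) dvd_rfl (dvd_zero _)

theorem pi2_pow_primeProduct_pow : pi2 n idx neg ^ primeProduct n ^ 3 = 1 := by
  simpa using pi1_pow_mul_pi2_pow_eq_one (s := 0) (z₁ := 0) (dvd_zero _) dvd_rfl

theorem coprime_primeProduct_of_apply_ne_self
    (h : ∀ x, (pi1 n idx neg s ^ z₁ * pi2 n idx neg ^ z₂) x ≠ x) :
    z₁.Coprime (primeProduct n) := by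
  refine Nat.Coprime.prod_right fun i _ => Nat.Coprime.mul_right ?_ ?_
  · refine ((P_prime _).coprime_iff_not_dvd.mpr fun hd => ?_).symm
    apply h (.inl ⟨i, .inl (.inl ⟨0, (P_prime _).pos⟩)⟩)
    rw [pi1_pow_mul_pi2_pow_apply_inl_inl_inl, finRotate_pow_eq_one_of_dvd hd]
    rfl
  · refine ((P_prime _).coprime_iff_not_dvd.mpr fun hd => ?_).symm
    apply h (.inl ⟨i, .inl (.inr ⟨0, (P_prime _).pos⟩)⟩)
    rw [pi1_pow_mul_pi2_pow_apply_inl_inl_inr, finRotate_pow_eq_one_of_dvd hd]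
    rfl

end

theorem fixpointFree_iff_coset_general
    (n m : ℕ) (idx : Fin m → Fin 3 → Fin n) (neg : Fin m → Fin 3 → Bool)
    (s : Fin n → ℕ → ℕ → ℕ) :
    (∃ z1 z2 : ℕ, ∀ a : Omega n idx neg,
        (pi1 n idx neg s ^ z1 * pi2 n idx neg ^ z2) a ≠ a) ↔
      ∃ z : ℕ, ∀ a : Omega n idx neg,
        (pi1 n idx neg s * pi2 n idx neg ^ z) a ≠ a := by
  refine ⟨fun ⟨z₁, z₂, h⟩ => ?_, fun ⟨z, hz⟩ => ⟨1, z, by simpa only [pow_one] using hz⟩⟩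
  exact Equiv.Perm.exists_mul_pow_apply_ne_self pi1_commute_pi2 pi1_pow_primeProduct_pow
    pi2_pow_primeProduct_pow ((coprime_primeProduct_of_apply_ne_self h).pow_right 3) h

/-- There are `z_1, z_2` such that `π_1^{z_1} π_2^{z_2}` is fixpoint-free if and only if
there is a `z` such that `π_1 π_2^{z}` is fixpoint-free: the exponent of `π_1` can always be
taken to be `1`, so the group `⟨π_1, π_2⟩` contains a fixpoint-free element iff the coset
`π_1⟨π_2⟩` does. -/
theorem fixpointFree_iff_coset
    (n m : ℕ) (idx : Fin m → Fin 3 → Fin n) (hidx : ∀ j, StrictMono (idx j))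
    (neg : Fin m → Fin 3 → Bool)
    (s : Fin n → ℕ → ℕ → ℕ)
    -- `s_{i,l,k}` is the unique number in `[0, p_i p̄_i - 1]` with `s_{i,l,k} ≡ l (mod p_i)`
    -- and `s_{i,l,k} ≡ k (mod p̄_i)`, for `l ∈ [p_i - 1]` and `k ∈ [p̄_i - 1]`
    (hs : ∀ i : Fin n, ∀ l k : ℕ, 1 ≤ l → l < P i.val → 1 ≤ k → k < P (n + i.val) →
      s i l k < P i.val * P (n + i.val) ∧
        s i l k % P i.val = l ∧ s i l k % P (n + i.val) = k)
    :
    (∃ z1 z2 : ℕ, ∀ a : Omega n idx neg,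
        (pi1 n idx neg s ^ z1 * pi2 n idx neg ^ z2) a ≠ a) ↔
      ∃ z : ℕ, ∀ a : Omega n idx neg,
        (pi1 n idx neg s * pi2 n idx neg ^ z) a ≠ a :=
  fixpointFree_iff_coset_general n m idx neg s

end SatConstruction
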